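/- arXiv:1705.02403 — 3 statements merged into one kernel-verified Lean document; each statement's English description precedes it below -/
import Mathlib

section
/- Let (E, dist) be a metric space, let r > 0, let M ≥ 1 be an integer, and let y_0, y_1, …, y_M be points of E such that dist(y_m, y_{m-1}) ≤ r for every m ∈ {1,…,M}. Then there exist an integer K with 1 ≤ K ≤ M and a strictly increasing map φ : {0,…,K} → {0,…,M} with φ(0) = 0 and φ(K) = M such that, writing z_k = y_{φ(k)}: (i) dist(z_k, z_{k-1}) ≤ r for every k ∈ {1,…,K}; (ii) dist(z_k, z_{k-2}) > r for every k ∈ {2,…,K}; and (iii) ∑_{k=1}^{K} dist(z_k, z_{k-1}) ≤ ∑_{m=1}^{M} dist(y_m, y_{m-1}). -/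
/-- **Waypoint thinning (forward pass).**
In a metric space, a finite sequence `y_0, …, y_M` (`M ≥ 1`) whose consecutive
distances are at most `r > 0` can be thinned to a subsequence (given by a strictly
increasing index map `φ : {0,…,K} → {0,…,M}` with `φ 0 = 0`, `φ K = M`,
`1 ≤ K ≤ M`) whose consecutive distances are still at most `r`, whose
second-neighbor distances are all strictly greater than `r`, and whose total
polygonal length does not exceed that of the original sequence. -/
theorem waypoint_thinning {E : Type*} [MetricSpace E] (r : ℝ) (hr : 0 < r)
    (M : ℕ) (hM : 1 ≤ M) (y : ℕ → E)
    (hstep : ∀ m, 1 ≤ m → m ≤ M → dist (y m) (y (m - 1)) ≤ r) :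
    ∃ (K : ℕ) (φ : ℕ → ℕ), 1 ≤ K ∧ K ≤ M ∧
      StrictMonoOn φ (Set.Iic K) ∧ φ 0 = 0 ∧ φ K = M ∧
      (∀ k, 1 ≤ k → k ≤ K → dist (y (φ k)) (y (φ (k - 1))) ≤ r) ∧
      (∀ k, 2 ≤ k → k ≤ K → r < dist (y (φ k)) (y (φ (k - 2)))) ∧
      ∑ k ∈ Finset.Icc 1 K, dist (y (φ k)) (y (φ (k - 1))) ≤
        ∑ m ∈ Finset.Icc 1 M, dist (y m) (y (m - 1)) := by
  induction M using Nat.strong_induction_on generalizing y with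
  | _ M ih =>
  by_cases h2 : ∀ k, 2 ≤ k → k ≤ M → r < dist (y k) (y (k - 2))
  · exact ⟨M, id, hM, le_refl M, fun a _ b _ h => h, rfl, rfl, hstep, h2, le_refl _⟩
  · push_neg at h2
    obtain ⟨k, hk2, hkM, hdist⟩ := h2
    obtain ⟨s, rfl⟩ : ∃ s, k = s + 2 := ⟨k - 2, by omega⟩
    obtain ⟨N, rfl⟩ : ∃ N, M = N + 1 := ⟨M - 1, by omega⟩
    have hds : dist (y (s + 2)) (y s) ≤ r := by simpa using hdist
    have hsN : s + 1 ≤ N := by omega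
    set j : ℕ → ℕ := fun m => if m ≤ s then m else m + 1 with hj
    have hjmono : StrictMono j := by
      intro a b hab; simp only [hj]; split <;> split <;> omega
    have hstep' : ∀ m, 1 ≤ m → m ≤ N → dist ((y ∘ j) m) ((y ∘ j) (m - 1)) ≤ r := by
      intro m hm1 hmN
      simp only [Function.comp, hj]
      rcases lt_trichotomy m (s + 1) with h | h | h
      · rw [if_pos (by omega), if_pos (by omega)]; exact hstep m hm1 (by omega)
      · subst h
        rw [if_neg (by omega), if_pos (by omega)]
        simpa using hds
      · rw [if_neg (by omega), if_neg (by omega)]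
        have := hstep (m + 1) (by omega) (by omega)
        rw [Nat.sub_add_cancel hm1]
        simpa using this
    have hsum2 : ∑ m ∈ Finset.Icc 1 N, dist ((y ∘ j) m) ((y ∘ j) (m - 1)) ≤
        ∑ m ∈ Finset.Icc 1 (N + 1), dist (y m) (y (m - 1)) := by
      have hIcc : ∀ a b : ℕ, Finset.Icc a b = Finset.Ico a (b + 1) := by
        intro a b; rw [Finset.Ico_add_one_right_eq_Icc]
      rw [hIcc, hIcc]
      rw [← Finset.sum_Ico_consecutive _ (by omega : 1 ≤ s + 1) (by omega : s + 1 ≤ N + 1)]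
      rw [← Finset.sum_Ico_consecutive _ (by omega : (1:ℕ) ≤ s + 1) (by omega : s + 1 ≤ N + 2)]
      rw [← Finset.sum_Ico_consecutive _ (by omega : s + 1 ≤ s + 3) (by omega : s + 3 ≤ N + 2)]
      have e1 : ∑ m ∈ Finset.Ico 1 (s + 1), dist ((y ∘ j) m) ((y ∘ j) (m - 1)) =
          ∑ m ∈ Finset.Ico 1 (s + 1), dist (y m) (y (m - 1)) := by
        refine Finset.sum_congr rfl fun m hm => ?_
        simp only [Finset.mem_Ico] at hm
        simp only [Function.comp, hj]
        rw [if_pos (by omega), if_pos (by omega)]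
      rw [e1]
      gcongr
      rw [Finset.sum_eq_sum_Ico_succ_bot (by omega : s + 1 < N + 1)]
      have e2 : ∑ m ∈ Finset.Ico (s + 2) (N + 1), dist ((y ∘ j) m) ((y ∘ j) (m - 1)) =
          ∑ m ∈ Finset.Ico (s + 3) (N + 2), dist (y m) (y (m - 1)) := by
        refine Finset.sum_nbij' (fun m => m + 1) (fun m => m - 1) ?_ ?_ ?_ ?_ ?_
        · intro m hm; simp only [Finset.mem_Ico] at hm ⊢; omega
        · intro m hm; simp only [Finset.mem_Ico] at hm ⊢; omega
        · intro m hm; simp only [Finset.mem_Ico] at hm; show m + 1 - 1 = m; omega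
        · intro m hm; simp only [Finset.mem_Ico] at hm; show m - 1 + 1 = m; omega
        · intro m hm
          simp only [Finset.mem_Ico] at hm
          simp only [Function.comp, hj]
          rw [if_neg (by omega), if_neg (by omega)]
          congr 2 <;> omega
      rw [e2]
      have e3 : dist ((y ∘ j) (s + 1)) ((y ∘ j) (s + 1 - 1)) ≤
          dist (y (s + 1)) (y s) + dist (y (s + 2)) (y (s + 1)) := by
        simp only [Function.comp, hj]
        rw [if_neg (by omega), if_pos (by omega)]
        calc dist (y (s + 1 + 1)) (y (s + 1 - 1)) = dist (y (s + 2)) (y s) := by norm_num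
          _ ≤ dist (y (s + 2)) (y (s + 1)) + dist (y (s + 1)) (y s) := dist_triangle _ _ _
          _ = dist (y (s + 1)) (y s) + dist (y (s + 2)) (y (s + 1)) := by ring
      have e4 : ∑ m ∈ Finset.Ico (s + 1) (s + 3), dist (y m) (y (m - 1)) =
          dist (y (s + 1)) (y s) + dist (y (s + 2)) (y (s + 1)) := by
        rw [Finset.sum_eq_sum_Ico_succ_bot (by omega : s + 1 < s + 3),
          Finset.sum_eq_sum_Ico_succ_bot (by omega : s + 2 < s + 3)]
        simp
      rw [e4]
      gcongr
    obtain ⟨K, φ', hK1, hKN, hφmono, hφ0, hφK, hstepφ, hsecφ, hsumφ⟩ :=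
      ih N (by omega) (by omega) (y ∘ j) hstep'
    refine ⟨K, j ∘ φ', hK1, by omega, fun a ha b hb hab => hjmono (hφmono ha hb hab), ?_, ?_,
      hstepφ, hsecφ, le_trans hsumφ hsum2⟩
    · simp only [Function.comp, hφ0, hj]; rw [if_pos (by omega)]
    · simp only [Function.comp, hφK, hj]; rw [if_neg (by omega)]
end

section
/- With the GMT* algorithm as specified in the context, suppose r > 0 and the waypoints y_0, y_1, …, y_M ∈ V satisfy y_0 = x_init, y_M ∈ X_goal, ‖y_m − y_{m-1}‖ ≤ r for all m ∈ {1,…,M}, and the closed Euclidean ball B(y_m, r) is contained in X_free for all m ∈ {0,…,M}. Let c_GMT denote the cost of the path returned by GMT* run with connection radius r and group cost threshold factor λ. Then GMT* terminates successfully and c_GMT ≤ (1 + 2λ) ∑_{k=1}^{M} ‖y_k − y_{k-1}‖. -/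
open Metric Set

noncomputable section

/-- The state space for `d`-dimensional planning: Euclidean space `ℝ^d`. -/
abbrev EucSp (d : ℕ) := EuclideanSpace ℝ (Fin d)

/-- The unit cube `[0,1]^d`, the state space `X` of the planning problem. -/
def unitCube (d : ℕ) : Set (EucSp d) := {x | ∀ i, x i ∈ Set.Icc (0 : ℝ) 1}

/-- The data of a GMT* planning problem: an obstacle set `Xobs ⊆ X = [0,1]^d`,
an initial state `xinit`, a goal region `Xgoal`, a sample set `V`, a connection
radius `r`, and a group cost threshold factor `lam` (λ). -/
structure GMTProblem (d : ℕ) where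
  Xobs : Set (EucSp d)
  xinit : EucSp d
  Xgoal : Set (EucSp d)
  V : Set (EucSp d)
  r : ℝ
  lam : ℝ

namespace GMTProblem

variable {d : ℕ}

/-- The free space `X_free = X \ X_obs`. -/
def Xfree (P : GMTProblem d) : Set (EucSp d) := unitCube d \ P.Xobs

/-- The group cost threshold increment `δ = λ r`. -/
def delta (P : GMTProblem d) : ℝ := P.lam * P.r

/-- Standing assumptions of the problem setup: `r > 0`, `λ ∈ (0,1]`, the sample
set `V` is finite, contained in the free space, contains `xinit` and at least one
goal sample, `xinit` is free, and the goal region is free. -/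
def Valid (P : GMTProblem d) : Prop :=
  0 < P.r ∧ P.lam ∈ Set.Ioc (0 : ℝ) 1 ∧ P.V.Finite ∧
    P.xinit ∈ P.Xfree ∧ P.V ⊆ P.Xfree ∧ P.xinit ∈ P.V ∧
    P.Xgoal ⊆ P.Xfree ∧ (P.V ∩ P.Xgoal).Nonempty

end GMTProblem

/-- An execution of the GMT* algorithm on the problem `P`.  The fields record, for
each iteration `i`, the sets `V_open`, `V_unexplored`, `V_closed` at the start of
iteration `i`, the cost-to-arrive `cost x` assigned to each tree node `x`, the
locally optimal parent `sel i x` selected for each candidate `x` at iteration `i`,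
the tree parent map, the expansion group `group i` (open nodes of cost `≤ i δ`),
the candidate set `cand i` (unexplored samples within distance `r` of the group),
and the set `added i` of candidates whose selected connection is collision-free,
which are added to the tree.  The propositional fields are exactly the
initialization and per-iteration transition rules of GMT*. -/
structure GMTRun {d : ℕ} (P : GMTProblem d) where
  Vopen : ℕ → Set (EucSp d)
  Vunexp : ℕ → Set (EucSp d)
  Vclosed : ℕ → Set (EucSp d)
  cost : EucSp d → ℝ
  sel : ℕ → EucSp d → EucSp d
  parent : EucSp d → EucSp d
  group : ℕ → Set (EucSp d)
  cand : ℕ → Set (EucSp d)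
  added : ℕ → Set (EucSp d)
  init_open : Vopen 0 = {P.xinit}
  init_unexp : Vunexp 0 = P.V \ {P.xinit}
  init_closed : Vclosed 0 = ∅
  cost_init : cost P.xinit = 0
  group_def : ∀ i, group i = {x ∈ Vopen i | cost x ≤ (i : ℝ) * P.delta}
  cand_def : ∀ i, cand i = {x ∈ Vunexp i | ∃ z ∈ group i, dist x z ≤ P.r}
  sel_mem : ∀ i, ∀ x ∈ cand i, sel i x ∈ Vopen i ∧ dist x (sel i x) ≤ P.r
  sel_min : ∀ i, ∀ x ∈ cand i, ∀ y ∈ Vopen i, dist x y ≤ P.r →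
    cost (sel i x) + dist x (sel i x) ≤ cost y + dist x y
  added_def : ∀ i, added i = {x ∈ cand i | segment ℝ (sel i x) x ⊆ P.Xfree}
  cost_added : ∀ i, ∀ x ∈ added i, cost x = cost (sel i x) + dist x (sel i x)
  parent_added : ∀ i, ∀ x ∈ added i, parent x = sel i x
  step_open : ∀ i, Vopen (i + 1) = (Vopen i \ group i) ∪ added i
  step_unexp : ∀ i, Vunexp (i + 1) = Vunexp i \ added i
  step_closed : ∀ i, Vclosed (i + 1) = Vclosed i ∪ group i

namespace GMTRun

variable {d : ℕ} {P : GMTProblem d}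

/-- GMT* terminates successfully: some expansion group contains a goal node. -/
def success (R : GMTRun P) : Prop := ∃ i, (R.group i ∩ P.Xgoal).Nonempty

open Classical in
/-- The terminal iteration `i_end`: the first iteration whose group contains a goal node. -/
def iend (R : GMTRun P) (h : R.success) : ℕ := Nat.find h

open Classical in
/-- The cost `c_GMT` of the path returned by GMT*: on success, the cost-to-arrive of the
minimum-cost goal node in the group at iteration `i_end` (junk value `0` on failure). -/
def cGMT (R : GMTRun P) : ℝ :=
  if h : R.success then sInf (R.cost '' (R.group (R.iend h) ∩ P.Xgoal)) else 0

end GMTRun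


section Aux

open Classical

variable {d : ℕ} {P : GMTProblem d} (R : GMTRun P)

namespace GMTRun

lemma cand_sub (i : ℕ) : R.cand i ⊆ R.Vunexp i := by
  rw [R.cand_def]; exact fun x hx => hx.1

lemma added_sub_cand (i : ℕ) : R.added i ⊆ R.cand i := by
  rw [R.added_def]; exact fun x hx => hx.1

lemma group_sub_open (i : ℕ) : R.group i ⊆ R.Vopen i := by
  rw [R.group_def]; exact fun x hx => hx.1

lemma cost_le_of_group {x : EucSp d} {i : ℕ} (h : x ∈ R.group i) :
    R.cost x ≤ (i : ℝ) * P.delta := by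
  rw [R.group_def] at h; exact h.2

lemma mem_group {x : EucSp d} {i : ℕ} (h1 : x ∈ R.Vopen i)
    (h2 : R.cost x ≤ (i : ℝ) * P.delta) : x ∈ R.group i := by
  rw [R.group_def]; exact ⟨h1, h2⟩

lemma unexp_mono {i j : ℕ} (h : i ≤ j) : R.Vunexp j ⊆ R.Vunexp i := by
  induction j, h using Nat.le_induction with
  | base => exact subset_rfl
  | succ n hn ih =>
      rw [R.step_unexp]
      exact Set.diff_subset.trans ih

lemma unexp_sub {i : ℕ} : R.Vunexp i ⊆ P.V \ {P.xinit} := by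
  have h := R.unexp_mono (Nat.zero_le i)
  rw [R.init_unexp] at h
  exact h

lemma open_sub (hx : P.xinit ∈ P.V) : ∀ i, R.Vopen i ⊆ P.V := by
  intro i
  induction i with
  | zero => rw [R.init_open]; simpa using hx
  | succ n ih =>
      rw [R.step_open]
      apply Set.union_subset
      · exact Set.diff_subset.trans ih
      · exact ((R.added_sub_cand n).trans ((R.cand_sub n).trans
          ((R.unexp_sub).trans Set.diff_subset)))

lemma open_not_unexp : ∀ i, ∀ x ∈ R.Vopen i, x ∉ R.Vunexp i := by
  intro i
  induction i with
  | zero =>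
      intro x hx
      rw [R.init_open] at hx
      rw [R.init_unexp]
      intro h
      exact h.2 hx
  | succ n ih =>
      intro x hx
      rw [R.step_open] at hx
      rw [R.step_unexp]
      rcases hx with h | h
      · exact fun hmem => ih x h.1 hmem.1
      · exact fun hmem => hmem.2 h

lemma exists_added {x : EucSp d} {a : ℕ} : ∀ {b : ℕ}, x ∈ R.Vunexp a → x ∉ R.Vunexp b →
    ∃ t, a ≤ t ∧ t < b ∧ x ∈ R.added t := by
  intro b
  induction b with
  | zero =>
      intro h1 h2
      exact absurd (R.unexp_mono (Nat.zero_le a) h1) h2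
  | succ n ih =>
      intro h1 h2
      by_cases hb : x ∈ R.Vunexp n
      · have hadd : x ∈ R.added n := by
          by_contra hn
          exact h2 (by rw [R.step_unexp]; exact ⟨hb, hn⟩)
        have hab : a ≤ n := by
          by_contra hcon
          push_neg at hcon
          exact (fun h => h (R.unexp_mono (by omega : n + 1 ≤ a) h1)) h2
        exact ⟨n, hab, by omega, hadd⟩
      · obtain ⟨t, h3, h4, h5⟩ := ih h1 hb
        exact ⟨t, h3, by omega, h5⟩

lemma added_open {x : EucSp d} {i : ℕ} (h : x ∈ R.added i) : x ∈ R.Vopen (i + 1) := by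
  rw [R.step_open]; exact Or.inr h

lemma open_stay {x : EucSp d} {i : ℕ} (h : x ∈ R.Vopen i) (hng : x ∉ R.group i) :
    x ∈ R.Vopen (i + 1) := by
  rw [R.step_open]; exact Or.inl ⟨h, hng⟩

lemma reach_group (hδ : 0 ≤ P.delta) :
    ∀ (k s : ℕ) (x : EucSp d), x ∈ R.Vopen s → R.cost x ≤ ((s + k : ℕ) : ℝ) * P.delta →
    ∃ i, s ≤ i ∧ i ≤ s + k ∧ x ∈ R.group i ∧ ∀ j, s ≤ j → j ≤ i → x ∈ R.Vopen j := by
  intro k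
  induction k with
  | zero =>
      intro s x hx hc
      refine ⟨s, le_rfl, by omega, R.mem_group hx (by simpa using hc), ?_⟩
      intro j h1 h2
      have : j = s := le_antisymm h2 h1
      rwa [this]
  | succ k ih =>
      intro s x hx hc
      by_cases hg : x ∈ R.group s
      · refine ⟨s, le_rfl, by omega, hg, ?_⟩
        intro j h1 h2
        have : j = s := le_antisymm h2 h1
        rwa [this]
      · have hx' : x ∈ R.Vopen (s + 1) := R.open_stay hx hg
        have hc' : R.cost x ≤ (((s + 1) + k : ℕ) : ℝ) * P.delta := by
          have he : (s + 1) + k = s + (k + 1) := by omega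
          rw [he]; exact hc
        obtain ⟨i, h1, h2, h3, h4⟩ := ih (s + 1) x hx' hc'
        refine ⟨i, by omega, by omega, h3, ?_⟩
        intro j hj1 hj2
        rcases Nat.eq_or_lt_of_le hj1 with h | h
        · rwa [← h]
        · exact h4 j h hj2

lemma mem_cand_of {x z : EucSp d} {i : ℕ} (hx : x ∈ R.Vunexp i) (hz : z ∈ R.group i)
    (hd : dist x z ≤ P.r) : x ∈ R.cand i := by
  rw [R.cand_def]; exact ⟨hx, z, hz, hd⟩

lemma cand_added {x : EucSp d} {i : ℕ} (hfree : Metric.closedBall x P.r ⊆ P.Xfree)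
    (hr : 0 ≤ P.r) (hx : x ∈ R.cand i) : x ∈ R.added i := by
  rw [R.added_def]
  refine ⟨hx, ?_⟩
  obtain ⟨hso, hsd⟩ := R.sel_mem i x hx
  intro p hp
  apply hfree
  exact (convex_closedBall x P.r).segment_subset
    (by rw [Metric.mem_closedBall, dist_comm]; exact hsd)
    (Metric.mem_closedBall_self hr) hp


lemma iend_le (h : R.success) {n : ℕ} (hn : (R.group n ∩ P.Xgoal).Nonempty) :
    R.iend h ≤ n := Nat.find_le hn

lemma iend_spec (h : R.success) : (R.group (R.iend h) ∩ P.Xgoal).Nonempty :=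
  Nat.find_spec h

end GMTRun

/-- The cumulative length of the waypoint path up to index `n`. -/
def Dsum {d : ℕ} (y : ℕ → EucSp d) (n : ℕ) : ℝ :=
  ∑ k ∈ Finset.Icc 1 n, dist (y k) (y (k - 1))

lemma Dsum_zero {d : ℕ} (y : ℕ → EucSp d) : Dsum y 0 = 0 := by
  simp [Dsum]

lemma Dsum_succ {d : ℕ} (y : ℕ → EucSp d) (n : ℕ) :
    Dsum y (n + 1) = Dsum y n + dist (y (n + 1)) (y n) := by
  have h := Finset.sum_Icc_succ_top (by omega : 1 ≤ n + 1)
    (fun k => dist (y k) (y (k - 1)))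
  simp only [Dsum, h, Nat.add_sub_cancel]

lemma Dsum_mono {d : ℕ} (y : ℕ → EucSp d) {a b : ℕ} (h : a ≤ b) :
    Dsum y a ≤ Dsum y b := by
  induction b, h using Nat.le_induction with
  | base => exact le_refl _
  | succ n hn ih =>
      rw [Dsum_succ]
      have := dist_nonneg (x := y (n + 1)) (y := y n)
      linarith

lemma Dsum_nonneg {d : ℕ} (y : ℕ → EucSp d) (n : ℕ) : 0 ≤ Dsum y n := by
  have := Dsum_mono y (Nat.zero_le n)
  rw [Dsum_zero] at this
  exact this

lemma dist_le_Dsum {d : ℕ} (y : ℕ → EucSp d) {b a : ℕ} (h : b ≤ a) :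
    dist (y a) (y b) ≤ Dsum y a - Dsum y b := by
  induction a, h using Nat.le_induction with
  | base => simp
  | succ n hn ih =>
      have h1 : dist (y (n + 1)) (y b) ≤ dist (y (n + 1)) (y n) + dist (y n) (y b) :=
        dist_triangle _ _ _
      rw [Dsum_succ]
      linarith

end Aux

/-- **Bounded Suboptimality (Theorem 2 of the paper).**
Suppose `r > 0` and the waypoints `y_0, …, y_M ∈ V` satisfy `y_0 = x_init`,
`y_M ∈ X_goal`, `‖y_m − y_{m−1}‖ ≤ r` for all `m ∈ {1,…,M}`, and the closed ball
`B(y_m, r)` is contained in `X_free` for all `m ∈ {0,…,M}`.  Then GMT* run with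
connection radius `r` and group cost threshold factor `λ` terminates successfully
and the cost of the returned path satisfies
`c_GMT ≤ (1 + 2λ) ∑_{k=1}^{M} ‖y_k − y_{k−1}‖`. -/
theorem gmt_bounded_suboptimality {d : ℕ} (hd : 2 ≤ d)
    (P : GMTProblem d) (hP : P.Valid) (R : GMTRun P)
    (M : ℕ) (y : ℕ → EucSp d)
    (hy0 : y 0 = P.xinit) (hyM : y M ∈ P.Xgoal)
    (hyV : ∀ m ≤ M, y m ∈ P.V)
    (hstep : ∀ m, 1 ≤ m → m ≤ M → dist (y m) (y (m - 1)) ≤ P.r)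
    (hball : ∀ m ≤ M, Metric.closedBall (y m) P.r ⊆ P.Xfree) :
    R.success ∧
      R.cGMT ≤ (1 + 2 * P.lam) * ∑ k ∈ Finset.Icc 1 M, dist (y k) (y (k - 1)) := by
  classical
  obtain ⟨hr, hlam, hVfin, hxfree, hVfree, hxV, hgoalfree, hVg⟩ := hP
  have hl0 : 0 < P.lam := hlam.1
  have hl1 : P.lam ≤ 1 := hlam.2
  have hδdef : P.delta = P.lam * P.r := rfl
  have hδ : 0 < P.delta := by rw [hδdef]; positivity
  have hδr : P.delta ≤ P.r := by rw [hδdef]; nlinarith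
  have h12 : (0:ℝ) < 1 + 2 * P.lam := by linarith
  have hrl : (1 + 2 * P.lam) * P.r = P.r + 2 * P.delta := by rw [hδdef]; ring
  have hg0 : P.xinit ∈ R.group 0 :=
    R.mem_group (by rw [R.init_open]; rfl) (by rw [R.cost_init]; simp)
  -- main induction on waypoint index
  have key : ∀ m, m ≤ M →
      (R.cost (y m) ≤ (1 + 2 * P.lam) * Dsum y m) ∧
      (1 ≤ m → R.cost (y m) ≤ (1 + 2 * P.lam) * Dsum y (m - 1) + P.r) ∧
      (∀ j, y m ∈ R.added j →
        (j : ℝ) * P.delta ≤ (1 + 2 * P.lam) * Dsum y m ∧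
        (1 ≤ m → (j : ℝ) * P.delta ≤ (1 + 2 * P.lam) * Dsum y (m - 1) + P.delta)) ∧
      (∃ i, y m ∈ R.group i ∧
        (i : ℝ) * P.delta ≤ (1 + 2 * P.lam) * Dsum y m + P.delta ∧
        (1 ≤ m → (i : ℝ) * P.delta ≤ (1 + 2 * P.lam) * Dsum y (m - 1) + P.r + P.delta) ∧
        (∀ j, j ≤ i → y m ∈ R.Vunexp j ∨ y m ∈ R.Vopen j)) := by
    intro m
    induction m using Nat.strong_induction_on with
    | _ m IH =>
    intro hmM
    by_cases hinit : y m = P.xinit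
    · -- the waypoint is the initial state
      have hD := Dsum_nonneg y m
      have hD1 := Dsum_nonneg y (m - 1)
      have hDm_nn : 0 ≤ (1 + 2 * P.lam) * Dsum y m := mul_nonneg (by linarith) hD
      have hDm1_nn : 0 ≤ (1 + 2 * P.lam) * Dsum y (m - 1) := mul_nonneg (by linarith) hD1
      have hcost0 : R.cost (y m) = 0 := by rw [hinit, R.cost_init]
      refine ⟨by rw [hcost0]; linarith,
        fun _ => by rw [hcost0]; linarith, ?_,
        0, by rw [hinit]; exact hg0,
        by simp; linarith, fun _ => by simp; linarith, ?_⟩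
      · intro j hj
        exfalso
        exact (R.unexp_sub ((R.cand_sub j) ((R.added_sub_cand j) hj))).2 (by rw [hinit]; rfl)
      · intro j hj
        have hj0 : j = 0 := by omega
        subst hj0
        exact Or.inr (by rw [hinit, R.init_open]; rfl)
    · -- main case
      have hm1 : 1 ≤ m := by
        rcases Nat.eq_zero_or_pos m with h | h
        · exfalso; subst h; exact hinit hy0
        · exact h
      obtain ⟨m', rfl⟩ : ∃ m', m = m' + 1 := ⟨m - 1, by omega⟩
      simp only [Nat.add_sub_cancel]
      have hdm : dist (y (m' + 1)) (y m') ≤ P.r := by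
        have := hstep (m' + 1) (by omega) hmM
        simpa using this
      -- the window minimum w
      have hexw : ∃ k, k < m' + 1 ∧ Dsum y (m' + 1) - Dsum y k ≤ P.r := by
        refine ⟨m', by omega, ?_⟩
        rw [Dsum_succ]
        linarith
      obtain ⟨w, hwm, hwr, hwmin⟩ : ∃ w, w < m' + 1 ∧
          Dsum y (m' + 1) - Dsum y w ≤ P.r ∧
          (1 ≤ w → P.r < Dsum y (m' + 1) - Dsum y (w - 1)) := by
        refine ⟨Nat.find hexw, (Nat.find_spec hexw).1, (Nat.find_spec hexw).2, ?_⟩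
        intro hw1
        have h := Nat.find_min hexw (by omega : Nat.find hexw - 1 < Nat.find hexw)
        push_neg at h
        have h2 := (Nat.find_spec hexw).1
        exact h (by omega)
      have hwM : w ≤ M := by omega
      obtain ⟨hCw, hC2w, hAw, iw, hgw, hTw, hT2w, hUw⟩ := IH w hwm hwM
      have hdysum : dist (y (m' + 1)) (y w) ≤ Dsum y (m' + 1) - Dsum y w :=
        dist_le_Dsum y (le_of_lt hwm)
      have hdyw : dist (y (m' + 1)) (y w) ≤ P.r := le_trans hdysum hwr
      have hunexp0 : y (m' + 1) ∈ R.Vunexp 0 := by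
        rw [R.init_unexp]; exact ⟨hyV _ hmM, hinit⟩
      have hballm := hball (m' + 1) hmM
      have hcand_add : ∀ (i : ℕ) (z : EucSp d), y (m' + 1) ∈ R.Vunexp i → z ∈ R.group i →
          dist (y (m' + 1)) z ≤ P.r → y (m' + 1) ∈ R.added i :=
        fun i z h1 h2 h3 => R.cand_added hballm (le_of_lt hr) (R.mem_cand_of h1 h2 h3)
      -- any add time of `y (m'+1)` is at most any group time of any window waypoint
      have haddle : ∀ j', y (m' + 1) ∈ R.added j' → ∀ (k ik : ℕ),
          dist (y (m' + 1)) (y k) ≤ P.r → y k ∈ R.group ik → j' ≤ ik := by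
        intro j' hj' k ik hdk hgk
        by_contra hlt
        push_neg at hlt
        have h1 : y (m' + 1) ∈ R.Vunexp j' := (R.cand_sub j') ((R.added_sub_cand j') hj')
        have h2 : y (m' + 1) ∈ R.Vunexp ik := R.unexp_mono (le_of_lt hlt) h1
        have h3 : y (m' + 1) ∈ R.added ik := hcand_add ik (y k) h2 hgk hdk
        have h4 : y (m' + 1) ∉ R.Vunexp (ik + 1) := by
          rw [R.step_unexp]; exact fun hmem => hmem.2 h3
        exact h4 (R.unexp_mono (by omega : ik + 1 ≤ j') h1)
      -- there is an add event, no later than iw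
      obtain ⟨j, hjadd, hjiw⟩ : ∃ j, y (m' + 1) ∈ R.added j ∧ j ≤ iw := by
        by_cases hcu : y (m' + 1) ∈ R.Vunexp iw
        · exact ⟨iw, hcand_add iw (y w) hcu hgw hdyw, le_rfl⟩
        · obtain ⟨t, _, ht2, ht3⟩ := R.exists_added hunexp0 hcu
          exact ⟨t, ht3, le_of_lt ht2⟩
      have hcandj : y (m' + 1) ∈ R.cand j := (R.added_sub_cand j) hjadd
      have hcost_min : ∀ u ∈ R.Vopen j, dist (y (m' + 1)) u ≤ P.r →
          R.cost (y (m' + 1)) ≤ R.cost u + dist (y (m' + 1)) u := by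
        intro u hu hdu
        rw [R.cost_added j _ hjadd]
        exact R.sel_min j _ hcandj u hu hdu
      have hcost_jr : R.cost (y (m' + 1)) ≤ (j : ℝ) * P.delta + P.r := by
        have hc := hcandj
        rw [R.cand_def] at hc
        obtain ⟨-, z, hz, hdz⟩ := hc
        have h1 := hcost_min z (R.group_sub_open j hz) hdz
        have h2 := R.cost_le_of_group hz
        linarith
      -- per-window-waypoint bound
      have hperk : ∀ k, k < m' + 1 → k ≤ M → dist (y (m' + 1)) (y k) ≤ P.r →
          R.cost (y (m' + 1)) ≤ R.cost (y k) + dist (y (m' + 1)) (y k) ∨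
          (1 ≤ k ∧ ∃ t, j ≤ t ∧ y k ∈ R.added t) := by
        intro k hk hkM hdk
        obtain ⟨-, -, -, ik, hgk, -, -, hUk⟩ := IH k hk hkM
        have hjik : j ≤ ik := haddle j hjadd k ik hdk hgk
        rcases hUk j hjik with hu | ho
        · right
          have hk1 : 1 ≤ k := by
            by_contra hcon
            push_neg at hcon
            have hk0 : k = 0 := by omega
            subst hk0
            exact (R.unexp_sub hu).2 (by rw [hy0]; rfl)
          have hnu : y k ∉ R.Vunexp ik := R.open_not_unexp ik (y k) (R.group_sub_open ik hgk)
          obtain ⟨t, ht1, -, ht3⟩ := R.exists_added hu hnu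
          exact ⟨hk1, t, ht1, ht3⟩
        · exact Or.inl (hcost_min (y k) ho hdk)
      -- cost bound (C)
      have hC : R.cost (y (m' + 1)) ≤ (1 + 2 * P.lam) * Dsum y (m' + 1) := by
        rcases hperk w hwm hwM hdyw with h | ⟨hw1, t, htj, htadd⟩
        · have h2 : Dsum y w ≤ Dsum y (m' + 1) := Dsum_mono y (le_of_lt hwm)
          have e1 : (1 + 2 * P.lam) * Dsum y w + (Dsum y (m' + 1) - Dsum y w)
              + 2 * P.lam * (Dsum y (m' + 1) - Dsum y w)
              = (1 + 2 * P.lam) * Dsum y (m' + 1) := by ring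
          have hp : 0 ≤ 2 * P.lam * (Dsum y (m' + 1) - Dsum y w) :=
            mul_nonneg (by linarith) (by linarith)
          linarith
        · have hA := ((IH w hwm hwM).2.2.1 t htadd).2 hw1
          have hgap := hwmin hw1
          have htd : (j : ℝ) * P.delta ≤ (t : ℝ) * P.delta :=
            mul_le_mul_of_nonneg_right (by exact_mod_cast htj) (le_of_lt hδ)
          have hh : (1 + 2 * P.lam) * P.r ≤
              (1 + 2 * P.lam) * (Dsum y (m' + 1) - Dsum y (w - 1)) :=
            mul_le_mul_of_nonneg_left (le_of_lt hgap) (le_of_lt h12)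
          have e : (1 + 2 * P.lam) * (Dsum y (m' + 1) - Dsum y (w - 1))
              = (1 + 2 * P.lam) * Dsum y (m' + 1)
                - (1 + 2 * P.lam) * Dsum y (w - 1) := by ring
          linarith
      -- cost bound (C2')
      have hC2 : R.cost (y (m' + 1)) ≤ (1 + 2 * P.lam) * Dsum y m' + P.r := by
        rcases hperk m' (by omega) (by omega) hdm with h | ⟨-, t, htj, htadd⟩
        · have hCk := (IH m' (by omega) (by omega)).1
          linarith
        · have hA := ((IH m' (by omega) (by omega)).2.2.1 t htadd).1
          have htd : (j : ℝ) * P.delta ≤ (t : ℝ) * P.delta :=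
            mul_le_mul_of_nonneg_right (by exact_mod_cast htj) (le_of_lt hδ)
          linarith
      -- add-time bound (A)
      have hApack : ∀ j', y (m' + 1) ∈ R.added j' →
          (j' : ℝ) * P.delta ≤ (1 + 2 * P.lam) * Dsum y (m' + 1) ∧
          (1 ≤ m' + 1 → (j' : ℝ) * P.delta ≤ (1 + 2 * P.lam) * Dsum y m' + P.delta) := by
        intro j' hj'
        have h1 : j' ≤ iw := haddle j' hj' w iw hdyw hgw
        have hj'd : (j' : ℝ) * P.delta ≤ (iw : ℝ) * P.delta :=
          mul_le_mul_of_nonneg_right (by exact_mod_cast h1) (le_of_lt hδ)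
        constructor
        · rcases Nat.eq_zero_or_pos w with hw0 | hw1
          · have hdy0 : dist (y (m' + 1)) (y 0) ≤ P.r := by rw [← hw0]; exact hdyw
            have hg00 : y 0 ∈ R.group 0 := by rw [hy0]; exact hg0
            have hj0' : j' ≤ 0 := haddle j' hj' 0 0 hdy0 hg00
            have hj0 : j' = 0 := by omega
            rw [hj0]
            simp
            exact mul_nonneg (by linarith) (Dsum_nonneg y _)
          · have hT2 := hT2w hw1
            have hgap := hwmin hw1
            have hh : (1 + 2 * P.lam) * P.r ≤
                (1 + 2 * P.lam) * (Dsum y (m' + 1) - Dsum y (w - 1)) :=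
              mul_le_mul_of_nonneg_left (le_of_lt hgap) (le_of_lt h12)
            have e : (1 + 2 * P.lam) * (Dsum y (m' + 1) - Dsum y (w - 1))
                = (1 + 2 * P.lam) * Dsum y (m' + 1)
                  - (1 + 2 * P.lam) * Dsum y (w - 1) := by ring
            linarith
        · intro _
          have hDw : Dsum y w ≤ Dsum y m' := Dsum_mono y (by omega)
          have hh : (1 + 2 * P.lam) * Dsum y w ≤ (1 + 2 * P.lam) * Dsum y m' :=
            mul_le_mul_of_nonneg_left hDw (le_of_lt h12)
          linarith
      have hjb := hApack j hjadd
      -- grouping event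
      have hopen1 : y (m' + 1) ∈ R.Vopen (j + 1) := R.added_open hjadd
      set c := R.cost (y (m' + 1)) with hcdef
      set N := max (j + 1) ⌈c / P.delta⌉₊ with hNdef
      have hcostN : c ≤ (N : ℝ) * P.delta := by
        have h1 : c / P.delta ≤ (⌈c / P.delta⌉₊ : ℝ) := Nat.le_ceil _
        have h2 : ((⌈c / P.delta⌉₊ : ℕ) : ℝ) ≤ (N : ℝ) := by
          exact_mod_cast le_max_right (j + 1) _
        calc c = (c / P.delta) * P.delta := by field_simp
          _ ≤ (⌈c / P.delta⌉₊ : ℝ) * P.delta :=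
              mul_le_mul_of_nonneg_right h1 (le_of_lt hδ)
          _ ≤ (N : ℝ) * P.delta := mul_le_mul_of_nonneg_right h2 (le_of_lt hδ)
      have hNs : j + 1 ≤ N := le_max_left _ _
      obtain ⟨i, hi1, hi2, hig, hiopen⟩ := R.reach_group (le_of_lt hδ) (N - (j + 1)) (j + 1)
        (y (m' + 1)) hopen1 (by rw [Nat.add_sub_cancel' hNs]; exact hcostN)
      have hiN : i ≤ N := by omega
      have hNle : (N : ℝ) * P.delta ≤ max ((j : ℝ) * P.delta + P.delta) (c + P.delta) := by
        rcases le_total (⌈c / P.delta⌉₊) (j + 1) with hc1 | hc1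
        · have hN : N = j + 1 := max_eq_left hc1
          rw [hN]
          have e : ((j + 1 : ℕ) : ℝ) * P.delta = (j : ℝ) * P.delta + P.delta := by
            push_cast; ring
          rw [e]
          exact le_max_left _ _
        · have hN : N = ⌈c / P.delta⌉₊ := max_eq_right hc1
          have hpos : 0 < ⌈c / P.delta⌉₊ := by omega
          have hcp : 0 < c / P.delta := Nat.ceil_pos.mp hpos
          have h3 : ((⌈c / P.delta⌉₊ : ℕ) : ℝ) < c / P.delta + 1 :=
            Nat.ceil_lt_add_one (le_of_lt hcp)
          have h4 : ((⌈c / P.delta⌉₊ : ℕ) : ℝ) * P.delta ≤ (c / P.delta + 1) * P.delta :=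
            mul_le_mul_of_nonneg_right (le_of_lt h3) (le_of_lt hδ)
          have h5 : (c / P.delta + 1) * P.delta = c + P.delta := by field_simp
          rw [hN]
          exact le_max_of_le_right (by linarith)
      have hid : (i : ℝ) * P.delta ≤ (N : ℝ) * P.delta :=
        mul_le_mul_of_nonneg_right (by exact_mod_cast hiN) (le_of_lt hδ)
      have hfin : (i : ℝ) * P.delta ≤ max ((j : ℝ) * P.delta + P.delta) (c + P.delta) :=
        le_trans hid hNle
      refine ⟨hC, fun _ => hC2, hApack, i, hig, ?_, ?_, ?_⟩
      · rcases max_choice ((j : ℝ) * P.delta + P.delta) (c + P.delta) with hmx | hmx <;>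
          rw [hmx] at hfin
        · linarith [hjb.1]
        · linarith [hC]
      · intro _
        rcases max_choice ((j : ℝ) * P.delta + P.delta) (c + P.delta) with hmx | hmx <;>
          rw [hmx] at hfin
        · have := hjb.2 (by omega)
          linarith
        · linarith [hC2]
      · intro j'' hj''
        rcases le_or_gt j'' j with h | h
        · exact Or.inl (R.unexp_mono h ((R.cand_sub j) hcandj))
        · exact Or.inr (hiopen j'' (by omega) hj'')
  -- final assembly
  obtain ⟨hCM, -, -, iM, hgM, hTM, -, -⟩ := key M le_rfl
  have hsucc : R.success := ⟨iM, ⟨y M, hgM, hyM⟩⟩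
  refine ⟨hsucc, ?_⟩
  have hrw : R.cGMT = sInf (R.cost '' (R.group (R.iend hsucc) ∩ P.Xgoal)) := by
    unfold GMTRun.cGMT
    exact dif_pos hsucc
  rw [hrw]
  have hie : R.iend hsucc ≤ iM := R.iend_le hsucc ⟨y M, hgM, hyM⟩
  obtain ⟨g, hgmem, hggoal⟩ := R.iend_spec hsucc
  have hsub : R.group (R.iend hsucc) ∩ P.Xgoal ⊆ P.V := fun x hx =>
    R.open_sub hxV _ (R.group_sub_open _ hx.1)
  have hbdd : BddBelow (R.cost '' (R.group (R.iend hsucc) ∩ P.Xgoal)) :=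
    ((hVfin.subset hsub).image R.cost).bddBelow
  show sInf (R.cost '' (R.group (R.iend hsucc) ∩ P.Xgoal)) ≤ (1 + 2 * P.lam) * Dsum y M
  rcases eq_or_lt_of_le hie with heq | hlt
  · have hmem : R.cost (y M) ∈ R.cost '' (R.group (R.iend hsucc) ∩ P.Xgoal) :=
      ⟨y M, ⟨by rw [heq]; exact hgM, hyM⟩, rfl⟩
    exact le_trans (csInf_le hbdd hmem) hCM
  · have hmem : R.cost g ∈ R.cost '' (R.group (R.iend hsucc) ∩ P.Xgoal) :=
      ⟨g, ⟨hgmem, hggoal⟩, rfl⟩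
    have h1 : R.cost g ≤ ((R.iend hsucc : ℕ) : ℝ) * P.delta := R.cost_le_of_group hgmem
    have h2 : ((R.iend hsucc : ℕ) : ℝ) + 1 ≤ (iM : ℝ) := by exact_mod_cast hlt
    have h3 : ((R.iend hsucc : ℕ) : ℝ) * P.delta ≤ ((iM : ℝ) - 1) * P.delta :=
      mul_le_mul_of_nonneg_right (by linarith) (le_of_lt hδ)
    have e : ((iM : ℝ) - 1) * P.delta = (iM : ℝ) * P.delta - P.delta := by ring
    have h4 := csInf_le hbdd hmem
    linarith
end
end

section
/- With the GMT* algorithm as specified in the context, suppose r > 0 and the waypoints y_0, y_1, …, y_M ∈ V satisfy y_0 = x_init, y_M ∈ X_goal, ‖y_m − y_{m-1}‖ ≤ r for all m ∈ {1,…,M}, ‖y_m − y_{m-2}‖ > r for all m ∈ {2,…,M}, and the closed Euclidean ball B(y_m, r) ⊆ X_free for all m ∈ {0,…,M}. For each m let S_m = ∑_{k=1}^{m} ‖y_k − y_{k-1}‖ (with S_0 = 0), let c(y_m) be the cost-to-arrive of y_m in the tree generated by running GMT* to completion (c(y_m) = ∞ if y_m is never added to the tree), and let i_m be the first iteration after which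 y_m belongs to V_open (i_m = ∞ if never). Then for every m ∈ {1,…,M}, at least one of the following holds: (a) c_GMT ≤ S_m + mδ; or (b) c(y_m) ≤ S_m + (m−1)δ and i_m ≤ ⌈S_{m-1}/δ⌉ + m. -/
open Metric Set

noncomputable section

namespace GMTRun

variable {d : ℕ} {P : GMTProblem d}

lemma open_cost_nonneg (R : GMTRun P) (i : ℕ) : ∀ x ∈ R.Vopen i, 0 ≤ R.cost x := by
  induction i with
  | zero =>
    intro x hx
    rw [R.init_open] at hx
    simp only [Set.mem_singleton_iff] at hx
    simp [hx, R.cost_init]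
  | succ i ih =>
    intro x hx
    rw [R.step_open] at hx
    rcases hx with hx | hx
    · exact ih x hx.1
    · have hc : x ∈ R.cand i := by
        rw [R.added_def] at hx; exact hx.1
      have hsel := R.sel_mem i x hc
      rw [R.cost_added i x hx]
      exact add_nonneg (ih _ hsel.1) dist_nonneg

lemma persist (R : GMTRun P) {i : ℕ} {x : EucSp d} (hx : x ∈ R.Vopen i)
    (h : ¬ R.cost x ≤ (i : ℝ) * P.delta) : x ∈ R.Vopen (i + 1) := by
  rw [R.step_open]
  left
  refine ⟨hx, fun hg => ?_⟩
  rw [R.group_def] at hg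
  exact h hg.2

lemma open_of_le (R : GMTRun P) {x : EucSp d} {i j : ℕ} (hij : i ≤ j)
    (hx : x ∈ R.Vopen i)
    (h : ∀ k, i ≤ k → k < j → (k : ℝ) * P.delta < R.cost x) : x ∈ R.Vopen j := by
  induction j, hij using Nat.le_induction with
  | base => exact hx
  | succ j hij ih =>
    have hxj := ih fun k hk hk' => h k hk (hk'.trans (Nat.lt_succ_self j))
    exact R.persist hxj (not_le.mpr (h j hij (Nat.lt_succ_self j)))

lemma exists_added_s4 (R : GMTRun P) {x : EucSp d} (hxV : x ∈ P.V) (hne : x ≠ P.xinit) :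
    ∀ j, x ∉ R.Vunexp j → ∃ i < j, x ∈ R.added i := by
  intro j
  induction j with
  | zero =>
    intro h
    exact absurd (by rw [R.init_unexp]; exact ⟨hxV, hne⟩) h
  | succ j ih =>
    intro h
    by_cases hj : x ∈ R.Vunexp j
    · by_cases ha : x ∈ R.added j
      · exact ⟨j, Nat.lt_succ_self j, ha⟩
      · exact absurd (by rw [R.step_unexp]; exact ⟨hj, ha⟩) h
    · obtain ⟨i, hi, hia⟩ := ih hj
      exact ⟨i, hi.trans (Nat.lt_succ_self j), hia⟩

open Classical in
lemma success_cGMT_le (R : GMTRun P) {j : ℕ} (hδ : 0 ≤ P.delta)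
    (hne : (R.group j ∩ P.Xgoal).Nonempty) :
    R.success ∧ R.cGMT ≤ (j : ℝ) * P.delta := by
  have hs : R.success := ⟨j, hne⟩
  refine ⟨hs, ?_⟩
  rw [cGMT, dif_pos hs]
  obtain ⟨g, hg⟩ := Nat.find_spec hs
  have hgrp : g ∈ R.group (R.iend hs) := hg.1
  rw [R.group_def] at hgrp
  have hle : (R.iend hs : ℝ) ≤ (j : ℝ) := by
    exact_mod_cast Nat.find_le hne
  have hbdd : BddBelow (R.cost '' (R.group (R.iend hs) ∩ P.Xgoal)) := by
    refine ⟨0, ?_⟩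
    rintro t ⟨z, hz, rfl⟩
    have hz' := hz.1
    rw [R.group_def] at hz'
    exact R.open_cost_nonneg _ z hz'.1
  refine (csInf_le hbdd ⟨g, hg, rfl⟩).trans (hgrp.2.trans ?_)
  exact mul_le_mul_of_nonneg_right hle hδ

end GMTRun

open Classical in
/-- **Inductive claim in the proof of the Bounded Suboptimality theorem.**
Suppose `r > 0` and the waypoints `y_0, …, y_M ∈ V` satisfy `y_0 = x_init`,
`y_M ∈ X_goal`, `‖y_m − y_{m−1}‖ ≤ r` for all `m ∈ {1,…,M}`,
`‖y_m − y_{m−2}‖ > r` for all `m ∈ {2,…,M}`, and `B(y_m, r) ⊆ X_free` for all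
`m ∈ {0,…,M}`.  With `S_m = ∑_{k=1}^m ‖y_k − y_{k−1}‖`, `c(y_m)` the
cost-to-arrive of `y_m` in the GMT* tree (undefined/infinite if `y_m` is never
added, expressed here by the existence witness), and `i_m` the first iteration
after which `y_m ∈ V_open`, for every `m ∈ {1,…,M}` at least one of the following
holds: (a) GMT* succeeds with `c_GMT ≤ S_m + mδ`; or (b) `y_m` is added to the
tree, `c(y_m) ≤ S_m + (m−1)δ`, and `i_m ≤ ⌈S_{m−1}/δ⌉ + m`. -/
theorem gmt_inductive_claim {d : ℕ} (hd : 2 ≤ d)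
    (P : GMTProblem d) (hP : P.Valid) (R : GMTRun P)
    (M : ℕ) (y : ℕ → EucSp d)
    (hy0 : y 0 = P.xinit) (hyM : y M ∈ P.Xgoal)
    (hyV : ∀ m ≤ M, y m ∈ P.V)
    (hstep : ∀ m, 1 ≤ m → m ≤ M → dist (y m) (y (m - 1)) ≤ P.r)
    (hskip : ∀ m, 2 ≤ m → m ≤ M → P.r < dist (y m) (y (m - 2)))
    (hball : ∀ m ≤ M, Metric.closedBall (y m) P.r ⊆ P.Xfree) :
    ∀ m, 1 ≤ m → m ≤ M →
      (R.success ∧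
        R.cGMT ≤ (∑ k ∈ Finset.Icc 1 m, dist (y k) (y (k - 1))) + m * P.delta) ∨
      (∃ h : ∃ i, y m ∈ R.Vopen i,
        R.cost (y m) ≤
            (∑ k ∈ Finset.Icc 1 m, dist (y k) (y (k - 1))) + ((m : ℝ) - 1) * P.delta ∧
        Nat.find h ≤
            ⌈(∑ k ∈ Finset.Icc 1 (m - 1), dist (y k) (y (k - 1))) / P.delta⌉₊ + m) := by
  obtain ⟨hr, hlam, -, -, -, hxV, -, -⟩ := hP
  have hδ : 0 < P.delta := mul_pos hlam.1 hr
  set S : ℕ → ℝ := fun m => ∑ k ∈ Finset.Icc 1 m, dist (y k) (y (k - 1)) with hSdef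
  have hS0 : S 0 = 0 := by simp [hSdef]
  have hSnn : ∀ m, 0 ≤ S m := fun m => Finset.sum_nonneg fun _ _ => dist_nonneg
  have hSsucc : ∀ m, S (m + 1) = S m + dist (y (m + 1)) (y m) := by
    intro m
    have h1 : (1 : ℕ) ≤ m + 1 := Nat.succ_le_succ (Nat.zero_le m)
    simp only [hSdef]
    rw [Finset.sum_Icc_succ_top h1]
    simp
  have hSmono : ∀ a b : ℕ, a ≤ b → S a ≤ S b := by
    intro a b hab
    exact Finset.sum_le_sum_of_subset_of_nonneg
      (Finset.Icc_subset_Icc le_rfl hab) (fun _ _ _ => dist_nonneg)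
  -- a generic segment-freedom fact
  have hseg : ∀ k ≤ M, ∀ z : EucSp d, dist (y k) z ≤ P.r →
      segment ℝ z (y k) ⊆ P.Xfree := by
    intro k hk z hz t ht
    refine hball k hk ?_
    refine (convex_closedBall (y k) P.r).segment_subset ?_ ?_ ht
    · rw [Metric.mem_closedBall, dist_comm]; exact hz
    · exact Metric.mem_closedBall_self hr.le
  have hxinit_open0 : P.xinit ∈ R.Vopen 0 := by rw [R.init_open]; rfl
  have key : ∀ m, 1 ≤ m → m ≤ M →
      (R.success ∧ R.cGMT ≤ S m + (m : ℝ) * P.delta) ∨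
      (∃ h : ∃ i, y m ∈ R.Vopen i,
        R.cost (y m) ≤ S m + ((m : ℝ) - 1) * P.delta ∧
        Nat.find h ≤ ⌈S (m - 1) / P.delta⌉₊ + m) := by
    intro m hm1
    induction m, hm1 using Nat.le_induction with
    | base =>
      intro h1M
      have hS1 : S 1 = dist (y 1) (y 0) := by
        rw [show (1:ℕ) = 0 + 1 from rfl, hSsucc 0, hS0, zero_add]
      by_cases h10 : y 1 = P.xinit
      · right
        have hmem0 : y 1 ∈ R.Vopen 0 := by rw [h10]; exact hxinit_open0
        refine ⟨⟨0, hmem0⟩, ?_, ?_⟩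
        · rw [h10, R.cost_init]
          push_cast
          linarith [hSnn 1]
        · exact le_trans (Nat.find_le hmem0) (Nat.zero_le _)
      · by_cases hg0 : (R.group 0 ∩ P.Xgoal).Nonempty
        · left
          obtain ⟨hs, hle⟩ := R.success_cGMT_le hδ.le hg0
          refine ⟨hs, hle.trans ?_⟩
          push_cast
          linarith [hSnn 1, hδ.le]
        · right
          have hy0g : P.xinit ∈ R.group 0 := by
            rw [R.group_def]
            exact ⟨hxinit_open0, by rw [R.cost_init]; simp⟩
          have hd1 : dist (y 1) P.xinit ≤ P.r := by
            have := hstep 1 le_rfl h1M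
            rwa [show (1:ℕ) - 1 = 0 from rfl, hy0] at this
          have hcand : y 1 ∈ R.cand 0 := by
            rw [R.cand_def]
            exact ⟨by rw [R.init_unexp]; exact ⟨hyV 1 h1M, h10⟩, P.xinit, hy0g, hd1⟩
          have hselm := R.sel_mem 0 (y 1) hcand
          have hadd : y 1 ∈ R.added 0 := by
            rw [R.added_def]
            exact ⟨hcand, hseg 1 h1M _ hselm.2⟩
          have hmem1 : y 1 ∈ R.Vopen 1 := by
            rw [R.step_open]; right; exact hadd
          refine ⟨⟨1, hmem1⟩, ?_, ?_⟩
          · have hmin := R.sel_min 0 (y 1) hcand P.xinit hxinit_open0 hd1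
            rw [R.cost_added 0 (y 1) hadd]
            rw [R.cost_init] at hmin
            rw [← hy0] at hd1 hmin
            push_cast
            rw [hS1]
            linarith
          · exact le_trans (Nat.find_le hmem1) (by omega)
    | succ m hm1 ih =>
      intro hM1
      have hmM : m ≤ M := le_trans (Nat.le_succ m) hM1
      obtain ⟨n, rfl⟩ : ∃ n, m = n + 1 := ⟨m - 1, by omega⟩
      rcases ih hmM with ⟨hs, hle⟩ | ⟨hmem, hcostb, hfindb⟩
      · left
        refine ⟨hs, hle.trans ?_⟩
        have h1 := hSmono (n + 1) ((n + 1)+1) (Nat.le_succ (n + 1))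
        push_cast
        linarith [hδ.le]
      · -- y (n + 1) is in the tree with the inductive bounds
        simp only [show (n + 1) - 1 = n from rfl] at hfindb
        set c : ℝ := R.cost (y (n + 1)) with hc
        set im : ℕ := Nat.find hmem with him
        have hyim : y (n + 1) ∈ R.Vopen im := Nat.find_spec hmem
        have hcnn : 0 ≤ c := R.open_cost_nonneg im (y (n + 1)) hyim
        set j : ℕ := max im ⌈c / P.delta⌉₊ with hj
        have hnotgroup : ∀ k, im ≤ k → k < j → (k : ℝ) * P.delta < c := by
          intro k hk hkj
          have hkc : k < ⌈c / P.delta⌉₊ := by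
            rcases Nat.lt_or_ge k ⌈c / P.delta⌉₊ with h | h
            · exact h
            · exact absurd hkj (not_lt.mpr (max_le hk h))
          have := (Nat.lt_ceil.mp hkc)
          calc (k : ℝ) * P.delta < (c / P.delta) * P.delta := by
                exact mul_lt_mul_of_pos_right this hδ
            _ = c := div_mul_cancel₀ c hδ.ne'
        have hyopenj : y (n + 1) ∈ R.Vopen j := R.open_of_le (le_max_left _ _) hyim hnotgroup
        have hcj : c ≤ (j : ℝ) * P.delta := by
          have h1 : c / P.delta ≤ (⌈c / P.delta⌉₊ : ℝ) := Nat.le_ceil _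
          have h2 : (⌈c / P.delta⌉₊ : ℝ) ≤ (j : ℝ) := by
            exact_mod_cast le_max_right im ⌈c / P.delta⌉₊
          rw [← div_mul_cancel₀ c hδ.ne']
          exact mul_le_mul_of_nonneg_right (h1.trans h2) hδ.le
        have hgj : y (n + 1) ∈ R.group j := by
          rw [R.group_def]; exact ⟨hyopenj, hcj⟩
        -- bounds on j
        have hfindR : (im : ℝ) ≤ (⌈S n / P.delta⌉₊ : ℝ) + (n + 1) := by exact_mod_cast hfindb
        have hceilSn : (⌈S n / P.delta⌉₊ : ℝ) ≤ S n / P.delta + 1 :=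
          (Nat.ceil_lt_add_one (div_nonneg (hSnn n) hδ.le)).le
        have hceilSm : S (n + 1) ≤ (⌈S (n + 1) / P.delta⌉₊ : ℝ) * P.delta := by
          calc S (n + 1) = S (n + 1) / P.delta * P.delta := (div_mul_cancel₀ (S (n + 1)) hδ.ne').symm
            _ ≤ (⌈S (n + 1) / P.delta⌉₊ : ℝ) * P.delta :=
                mul_le_mul_of_nonneg_right (Nat.le_ceil _) hδ.le
        have hSnm : S n ≤ S (n + 1) := hSmono n (n + 1) (Nat.le_succ n)
        have hjn : j ≤ ⌈S (n + 1) / P.delta⌉₊ + (n + 1) := by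
          refine max_le ?_ ?_
          · refine hfindb.trans (Nat.add_le_add_right ?_ (n + 1))
            refine Nat.ceil_mono ?_
            exact div_le_div_of_nonneg_right hSnm hδ.le
          · rw [Nat.ceil_le]
            push_cast
            rw [div_le_iff₀ hδ]
            have hcostb' := hcostb
            push_cast at hcostb'
            linarith [hceilSm, hδ.le]
        have hjR : (j : ℝ) * P.delta ≤ S (n + 1) + (((n + 1) : ℝ) + 1) * P.delta := by
          rcases le_total im ⌈c / P.delta⌉₊ with h | h
          · rw [hj, max_eq_right h]
            have h1 : (⌈c / P.delta⌉₊ : ℝ) ≤ c / P.delta + 1 :=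
              (Nat.ceil_lt_add_one (div_nonneg hcnn hδ.le)).le
            have h2 : (⌈c / P.delta⌉₊ : ℝ) * P.delta ≤ (c / P.delta + 1) * P.delta :=
              mul_le_mul_of_nonneg_right h1 hδ.le
            rw [add_mul, div_mul_cancel₀ c hδ.ne', one_mul] at h2
            have hcostb' := hcostb
            push_cast at hcostb' ⊢
            linarith [h2, hδ.le]
          · rw [hj, max_eq_left h]
            have h2 : (im : ℝ) * P.delta ≤ ((⌈S n / P.delta⌉₊ : ℝ) + (n + 1)) * P.delta :=
              mul_le_mul_of_nonneg_right hfindR hδ.le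
            have h3 : ((⌈S n / P.delta⌉₊ : ℝ)) * P.delta ≤ (S n / P.delta + 1) * P.delta :=
              mul_le_mul_of_nonneg_right hceilSn hδ.le
            rw [add_mul, div_mul_cancel₀ (S n) hδ.ne', one_mul] at h3
            push_cast at h2 ⊢
            linarith [h3, hSnm, hδ.le]
        have hdm1 : dist (y ((n + 1) + 1)) (y (n + 1)) ≤ P.r := by
          have := hstep ((n + 1) + 1) (by omega) hM1
          rwa [Nat.add_sub_cancel] at this
        by_cases hgoal : (R.group j ∩ P.Xgoal).Nonempty
        · left
          obtain ⟨hs, hle⟩ := R.success_cGMT_le hδ.le hgoal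
          refine ⟨hs, hle.trans ?_⟩
          have h1 := hSmono (n + 1) ((n + 1) + 1) (Nat.le_succ (n + 1))
          push_cast
          push_cast at hjR
          linarith
        · right
          by_cases hunexp : y ((n + 1) + 1) ∈ R.Vunexp j
          · -- fresh candidate at iteration j, connected via y (n + 1)
            have hcand : y ((n + 1) + 1) ∈ R.cand j := by
              rw [R.cand_def]
              exact ⟨hunexp, y (n + 1), hgj, hdm1⟩
            have hselm := R.sel_mem j (y ((n + 1) + 1)) hcand
            have hadd : y ((n + 1) + 1) ∈ R.added j := by
              rw [R.added_def]
              exact ⟨hcand, hseg ((n + 1) + 1) hM1 _ hselm.2⟩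
            have hmem1 : y ((n + 1) + 1) ∈ R.Vopen (j + 1) := by
              rw [R.step_open]; right; exact hadd
            refine ⟨⟨j + 1, hmem1⟩, ?_, ?_⟩
            · have hmin := R.sel_min j (y ((n + 1) + 1)) hcand (y (n + 1)) hyopenj hdm1
              rw [R.cost_added j (y ((n + 1) + 1)) hadd]
              have hS1 := hSsucc (n + 1)
              rw [hc] at hcostb
              push_cast at hcostb ⊢
              linarith [hδ.le]
            · simp only [Nat.add_sub_cancel]
              exact le_trans (Nat.find_le hmem1) (by omega)
          · -- y ((n + 1)+1) already left the unexplored set before iteration j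
            by_cases hx1 : y ((n + 1) + 1) = P.xinit
            · have hmem0 : y ((n + 1) + 1) ∈ R.Vopen 0 := by rw [hx1]; exact hxinit_open0
              refine ⟨⟨0, hmem0⟩, ?_, ?_⟩
              · rw [hx1, R.cost_init]
                have h1 := hSnn ((n + 1) + 1)
                have hm0 : (0 : ℝ) ≤ ((n + 1) : ℝ) * P.delta :=
                  by positivity
                push_cast
                linarith
              · exact le_trans (Nat.find_le hmem0) (Nat.zero_le _)
            · obtain ⟨i', hi'j, hadd'⟩ :=
                R.exists_added_s4 (hyV ((n + 1) + 1) hM1) hx1 j hunexp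
              have hcand' : y ((n + 1) + 1) ∈ R.cand i' := by
                rw [R.added_def] at hadd'; exact hadd'.1
              have hco := R.cost_added i' (y ((n + 1) + 1)) hadd'
              have hmem1 : y ((n + 1) + 1) ∈ R.Vopen (i' + 1) := by
                rw [R.step_open]; right; exact hadd'
              refine ⟨⟨i' + 1, hmem1⟩, ?_, ?_⟩
              · rcases le_or_gt im i' with hii | hii
                · -- y (n + 1) was already open at i'
                  have hyopeni' : y (n + 1) ∈ R.Vopen i' :=
                    R.open_of_le hii hyim fun k hk hkj =>
                      hnotgroup k hk (hkj.trans hi'j)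
                  have hmin := R.sel_min i' (y ((n + 1) + 1)) hcand' (y (n + 1)) hyopeni' hdm1
                  rw [hco]
                  have hS1 := hSsucc (n + 1)
                  rw [hc] at hcostb
                  push_cast at hcostb ⊢
                  linarith [hδ.le]
                · -- i' < im : use the skip condition
                  have hcand'' := hcand'
                  rw [R.cand_def] at hcand''
                  obtain ⟨-, z, hzg, hzd⟩ := hcand''
                  rw [R.group_def] at hzg
                  have hmin := R.sel_min i' (y ((n + 1) + 1)) hcand' z hzg.1 hzd
                  have hzc : R.cost z ≤ (i' : ℝ) * P.delta := hzg.2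
                  have hi'R : (i' : ℝ) ≤ (im : ℝ) - 1 := by
                    have : i' + 1 ≤ im := hii
                    have := (Nat.cast_le (α := ℝ)).mpr this
                    push_cast at this
                    linarith
                  have hskip' : P.r < dist (y ((n + 1) + 1)) (y n) := by
                    have := hskip ((n + 1) + 1) (by omega) hM1
                    rwa [show (n + 1) + 1 - 2 = n from rfl] at this
                  have htri : dist (y ((n + 1) + 1)) (y n) ≤
                      dist (y ((n + 1) + 1)) (y (n + 1)) + dist (y (n + 1)) (y n) :=
                    dist_triangle _ _ _
                  have hSm : S (n + 1) = S n + dist (y (n + 1)) (y n) := by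
                    have := hSsucc n
                    rwa [show n + 1 = (n + 1) from rfl] at this
                  have hSm1 : S ((n + 1) + 1) = S (n + 1) + dist (y ((n + 1) + 1)) (y (n + 1)) := hSsucc (n + 1)
                  have hb1 : R.cost (y ((n + 1) + 1)) ≤ (i' : ℝ) * P.delta + P.r := by
                    rw [hco]
                    exact le_trans hmin (add_le_add hzc hzd)
                  have himδ : (im : ℝ) * P.delta ≤ S n + (((n + 1) : ℝ) + 1) * P.delta := by
                    have h2 : (im : ℝ) * P.delta ≤ ((⌈S n / P.delta⌉₊ : ℝ) + (n + 1)) * P.delta :=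
                      mul_le_mul_of_nonneg_right hfindR hδ.le
                    have h3 : ((⌈S n / P.delta⌉₊ : ℝ)) * P.delta ≤ (S n / P.delta + 1) * P.delta :=
                      mul_le_mul_of_nonneg_right hceilSn hδ.le
                    rw [add_mul, div_mul_cancel₀ (S n) hδ.ne', one_mul] at h3
                    push_cast at h2 ⊢
                    linarith [h3, hδ.le]
                  have hprod := mul_le_mul_of_nonneg_right hi'R hδ.le
                  push_cast at himδ ⊢
                  linarith [hb1, hprod, hskip', htri, hSm, hSm1, hδ.le]
              · simp only [Nat.add_sub_cancel]
                exact le_trans (Nat.find_le hmem1) (by omega)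
  intro m h1 h2
  exact key m h1 h2
end
end
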